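/- arXiv:2207.12186 — 5 statements merged into one kernel-verified Lean document; each statement's English description precedes it below -/
import Mathlib

section
/- Gold identification in the limit (Gold, 1967, convergence part): Let X be a type, p : ℕ → X → Bool an enumeration of encodings, and (x, y) a labeled observation stream. If some encoding is fully compatible with the stream, then there exist L and T such that the Gold learner's guess satisfies G t = L for all t ≥ T, encoding L is fully compatible with the stream (p L (x s) = y s for all s : ℕ), and L is the least index whose encoding is fully compatible with the stream. -/
/-! Only the finitely many indices below the least fully compatible one `L` can ever be guessed
instead of it, and each of them is refuted by some observation; once all of these refutations
have been seen, `L` is the least compatible index forever after. -/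

open Filter

theorem Antitone.eventually_isLeast_of_isLeast_iInter {ι α : Type*} [Preorder ι]
    [LinearOrder α] [LocallyFiniteOrderBot α] {S : ι → Set α} (hS : Antitone S) {L : α}
    (hL : IsLeast (⋂ t, S t) L) : ∀ᶠ t in atTop, IsLeast (S t) L := by
  have refuted : ∀ n ∈ Set.Iio L, ∀ᶠ t in atTop, n ∉ S t := by
    intro n hn
    obtain ⟨t₀, hnt₀⟩ : ∃ t₀, n ∉ S t₀ := by
      simpa using fun h ↦ (not_le_of_gt hn) (hL.2 h)
    filter_upwards [eventually_ge_atTop t₀] with t ht using fun hnt ↦ hnt₀ (hS ht hnt)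
  filter_upwards [(Set.finite_Iio L).eventually_all.2 refuted] with t ht
  exact ⟨Set.mem_iInter.1 hL.1 t, fun m hm ↦ not_lt.1 fun hmL ↦ ht m hmL hm⟩

/-- **Gold identification in the limit (Gold, 1967, convergence part).**
If some encoding is fully compatible with the labeled observation stream, then
the Gold learner's guess `G t` (the least `n` compatible with the first `t`
observations) converges: there exist `L` and `T` with `G t = L` for all
`t ≥ T`, encoding `L` is fully compatible with the stream, and `L` is the
least index whose encoding is fully compatible with the stream. -/
theorem gold_identification_in_the_limit {X : Type*} (p : ℕ → X → Bool)
    (x : ℕ → X) (y : ℕ → Bool)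
    (G : ℕ → ℕ)
    (hG : ∀ t : ℕ, IsLeast {n : ℕ | ∀ s < t, p n (x s) = y s} (G t))
    (hN : ∃ N : ℕ, ∀ s : ℕ, p N (x s) = y s) :
    ∃ L T : ℕ,
      (∀ t : ℕ, T ≤ t → G t = L) ∧
      (∀ s : ℕ, p L (x s) = y s) ∧
      IsLeast {m : ℕ | ∀ s : ℕ, p m (x s) = y s} L := by
  classical
  set S : ℕ → Set ℕ := fun t ↦ {n | ∀ s < t, p n (x s) = y s}
  have hS : Antitone S := fun t t' htt' n hn s hs ↦ hn s (hs.trans_le htt')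
  have hSInter : ⋂ t, S t = {m | ∀ s, p m (x s) = y s} := by
    ext m
    simp only [S, Set.mem_iInter, Set.mem_ofPred_eq]
    exact ⟨fun h s ↦ h (s + 1) s s.lt_succ_self, fun h _ s _ ↦ h s⟩
  have hL := Nat.isLeast_find hN
  obtain ⟨T, hT⟩ := eventually_atTop.1
    (hS.eventually_isLeast_of_isLeast_iInter (hSInter ▸ hL))
  exact ⟨Nat.find hN, T, fun t ht ↦ (hG t).unique (hT t ht), hL.1, hL⟩
end

section
/- Gold learner understands identifiable concepts (Gold, 1967): Let X be a type, p : ℕ → X → Bool an enumeration of encodings, and (x, y) a labeled observation stream. Assume some encoding N is fully compatible with the stream, and assume identifiability: every encoding m that is fully compatible with the stream satisfies p m = p N (equality as functions X → Bool). Then there exist L and T such that the Gold learner's guess satisfies G t = L for all t ≥ T and p L = p N; that is, the Gold learner converges in finitely many steps to an encoding of the true concept. -/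
/-!
Let `L` be the least encoding compatible with the whole stream. Each of the finitely many
encodings below `L` is refuted by some observation, so after finitely many steps all of them
are refuted at once, while `L` is never refuted; from then on the least compatible encoding is
`L`. Identifiability gives `p L = p N`.
-/

open Filter

theorem Filter.eventually_not_forall_lt_atTop {Q : ℕ → Prop} (h : ¬ ∀ s, Q s) :
    ∀ᶠ t in atTop, ¬ ∀ s < t, Q s := by
  obtain ⟨s, hs⟩ := not_forall.1 h
  exact eventually_atTop.2 ⟨s + 1, fun t ht hQ => hs (hQ s (by omega))⟩

theorem Filter.eventually_isLeast_setOf_forall_lt {Q : ℕ → ℕ → Prop} {L : ℕ}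
    (hL : IsLeast {n | ∀ s, Q n s} L) :
    ∀ᶠ t in atTop, IsLeast {n | ∀ s < t, Q n s} L := by
  have hrefuted : ∀ᶠ t in atTop, ∀ m ∈ Set.Iio L, ¬ ∀ s < t, Q m s :=
    (eventually_all_finite (Set.finite_Iio L)).2 fun m hm =>
      eventually_not_forall_lt_atTop fun hQ => (hL.2 hQ).not_gt hm
  filter_upwards [hrefuted] with t ht
  exact ⟨fun s _ => hL.1 s, fun n hn => not_lt.1 fun hlt => ht n hlt hn⟩

/-- **Gold learner understands identifiable concepts (Gold, 1967).**
Assume some encoding `N` is fully compatible with the labeled observation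
stream, and assume identifiability: every encoding `m` fully compatible with
the stream satisfies `p m = p N`.  Then the Gold learner's guess `G t` (the
least `n` compatible with the first `t` observations) converges in finitely
many steps to an encoding of the true concept: there exist `L` and `T` such
that `G t = L` for all `t ≥ T` and `p L = p N`. -/
theorem gold_learner_understands {X : Type*} (p : ℕ → X → Bool)
    (x : ℕ → X) (y : ℕ → Bool)
    (G : ℕ → ℕ)
    (hG : ∀ t : ℕ, IsLeast {n : ℕ | ∀ s < t, p n (x s) = y s} (G t))
    (N : ℕ) (hN : ∀ s : ℕ, p N (x s) = y s)
    (hid : ∀ m : ℕ, (∀ s : ℕ, p m (x s) = y s) → p m = p N) :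
    ∃ L T : ℕ, (∀ t : ℕ, T ≤ t → G t = L) ∧ p L = p N := by
  obtain ⟨L, hL⟩ : ∃ L, IsLeast {n | ∀ s, p n (x s) = y s} L := ⟨_, isLeast_csInf ⟨N, hN⟩⟩
  obtain ⟨T, hT⟩ := eventually_atTop.1 (eventually_isLeast_setOf_forall_lt hL)
  exact ⟨L, T, fun t ht => (hG t).unique (hT t ht), hid L hL.1⟩
end

section
/- No feed-forward ReLU architecture can encode the concept of "even number" (ReLU instance of the paper's Proposition): Let N be the smallest set of functions ℝ → ℝ that contains every affine function x ↦ a·x + b and is closed under pointwise addition, composition, and the ReLU nonlinearity f ↦ (fun x => max (f x) 0). Then no f ∈ N satisfies f (2·n) ≥ 1/2 and f (2·n + 1) < 1/2 for all n : ℕ; that is, no such network can partition arbitrarily large numbers into even and odd, regardless of the number of weights. -/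
/-!
Every ReLU network is affine near `+∞` and near `-∞`: this is stable under sums, under the
ReLU (itself affine near both ends), and under composition, because an eventually affine map
is either eventually constant or tends to `±∞`, where the outer network is again affine.
But an affine function `a x + b` cannot be `≥ 1/2` at `2n` and `2n + 2` while `< 1/2` at the
midpoint `2n + 1`.
-/

/-- The class of one-dimensional ReLU networks: the smallest set of functions
`ℝ → ℝ` containing every affine function `x ↦ a·x + b` and closed under
pointwise addition, composition, and the ReLU nonlinearity. -/
inductive ReLUNet : (ℝ → ℝ) → Prop
  | affine (a b : ℝ) : ReLUNet (fun x => a * x + b)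
  | add {f g : ℝ → ℝ} : ReLUNet f → ReLUNet g → ReLUNet (fun x => f x + g x)
  | comp {f g : ℝ → ℝ} : ReLUNet f → ReLUNet g → ReLUNet (f ∘ g)
  | relu {f : ℝ → ℝ} : ReLUNet f → ReLUNet (fun x => max (f x) 0)

open Filter

def EventuallyAffine (l : Filter ℝ) (f : ℝ → ℝ) : Prop :=
  ∃ a b : ℝ, f =ᶠ[l] fun x => a * x + b

namespace EventuallyAffine

variable {l l' : Filter ℝ} {f g : ℝ → ℝ}

theorem add (hf : EventuallyAffine l f) (hg : EventuallyAffine l g) :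
    EventuallyAffine l fun x => f x + g x := by
  obtain ⟨a, b, hf⟩ := hf
  obtain ⟨c, d, hg⟩ := hg
  refine ⟨a + c, b + d, (hf.and hg).mono fun x ⟨hfx, hgx⟩ => ?_⟩
  simp only [hfx, hgx]
  ring

theorem comp_of_tendsto (hf : EventuallyAffine l' f) (hg : EventuallyAffine l g)
    (hgl : Tendsto g l l') : EventuallyAffine l (f ∘ g) := by
  obtain ⟨a, b, hf⟩ := hf
  obtain ⟨c, d, hg⟩ := hg
  refine ⟨a * c, a * d + b, ((hgl.eventually hf).and hg).mono fun x ⟨hfx, hgx⟩ => ?_⟩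
  dsimp only [Function.comp_apply] at hfx hgx ⊢
  rw [hfx, hgx]
  ring

end EventuallyAffine

theorem tendsto_affine_atTop_or_atBot {l : Filter ℝ} (hl : l = atTop ∨ l = atBot) {c : ℝ}
    (hc : c ≠ 0) (d : ℝ) :
    Tendsto (fun x => c * x + d) l atTop ∨ Tendsto (fun x => c * x + d) l atBot := by
  rcases hl with rfl | rfl <;> rcases hc.lt_or_gt with hc | hc
  · exact .inr <| tendsto_atBot_add_const_right _ d (tendsto_id.const_mul_atTop_of_neg hc)
  · exact .inl <| tendsto_atTop_add_const_right _ d (tendsto_id.const_mul_atTop hc)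
  · exact .inl <| tendsto_atTop_add_const_right _ d (tendsto_id.const_mul_atBot_of_neg hc)
  · exact .inr <| tendsto_atBot_add_const_right _ d (tendsto_id.const_mul_atBot hc)

theorem EventuallyAffine.comp {l : Filter ℝ} (hl : l = atTop ∨ l = atBot) {f g : ℝ → ℝ}
    (hf_atTop : EventuallyAffine atTop f) (hf_atBot : EventuallyAffine atBot f)
    (hg : EventuallyAffine l g) : EventuallyAffine l (f ∘ g) := by
  obtain ⟨c, d, hg_eq⟩ := id hg
  rcases eq_or_ne c 0 with rfl | hc
  · exact ⟨0, f d, hg_eq.mono fun x hx => by simp [hx]⟩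
  rcases tendsto_affine_atTop_or_atBot hl hc d with hlim | hlim
  · exact hf_atTop.comp_of_tendsto hg (hlim.congr' hg_eq.symm)
  · exact hf_atBot.comp_of_tendsto hg (hlim.congr' hg_eq.symm)

theorem eventuallyAffine_max_zero_atTop : EventuallyAffine atTop fun y => max y 0 :=
  ⟨1, 0, (eventually_ge_atTop 0).mono fun y hy => by simp [hy]⟩

theorem eventuallyAffine_max_zero_atBot : EventuallyAffine atBot fun y => max y 0 :=
  ⟨0, 0, (eventually_le_atBot 0).mono fun y hy => by simp [hy]⟩

theorem ReLUNet.eventuallyAffine {f : ℝ → ℝ} (hf : ReLUNet f) {l : Filter ℝ}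
    (hl : l = atTop ∨ l = atBot) : EventuallyAffine l f := by
  induction hf generalizing l with
  | affine a b => exact ⟨a, b, EventuallyEq.rfl⟩
  | add _ _ ihf ihg => exact (ihf hl).add (ihg hl)
  | comp _ _ ihf ihg => exact .comp hl (ihf (.inl rfl)) (ihf (.inr rfl)) (ihg hl)
  | relu _ ih =>
    exact .comp hl eventuallyAffine_max_zero_atTop eventuallyAffine_max_zero_atBot (ih hl)

/-- **No feed-forward ReLU architecture can encode the concept of "even
number".**  No one-dimensional ReLU network `f` satisfies `f (2·n) ≥ 1/2` and
`f (2·n + 1) < 1/2` for all `n : ℕ`; that is, no such network can partition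
arbitrarily large numbers into even and odd, regardless of the number of
weights. -/
theorem relu_net_cannot_encode_even (f : ℝ → ℝ) (hf : ReLUNet f) :
    ¬ (∀ n : ℕ, f (2 * n) ≥ 1 / 2 ∧ f (2 * n + 1) < 1 / 2) := by
  intro h
  obtain ⟨a, b, hab⟩ := hf.eventuallyAffine (.inl rfl)
  obtain ⟨M, hM⟩ := eventually_atTop.1 hab
  obtain ⟨n, hn⟩ := exists_nat_ge M
  have hn₀ : (0 : ℝ) ≤ n := n.cast_nonneg
  have h_even := (h n).1
  have h_odd := (h n).2
  have h_next := (h (n + 1)).1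
  push_cast at h_next
  rw [hM _ (by linarith)] at h_even h_odd h_next
  linarith
end

section
/- Nonzero nested exponential polynomials have finitely many real zeros: Let E be the smallest set of functions ℝ → ℝ that contains every constant function and the identity function, and is closed under pointwise addition, pointwise multiplication, and exponentiation f ↦ (fun x => Real.exp (f x)). Then for every f ∈ E, either f is identically zero on ℝ, or the zero set {x : ℝ | f x = 0} is finite. -/
inductive ExpPoly : (ℝ → ℝ) → Prop
  | const (c : ℝ) : ExpPoly (fun _ => c)
  | id : ExpPoly (fun x => x)
  | add {f g : ℝ → ℝ} : ExpPoly f → ExpPoly g → ExpPoly (fun x => f x + g x)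
  | mul {f g : ℝ → ℝ} : ExpPoly f → ExpPoly g → ExpPoly (fun x => f x * g x)
  | exp {f : ℝ → ℝ} : ExpPoly f → ExpPoly (fun x => Real.exp (f x))

/-!
A nested exponential polynomial is real analytic, so if it is not identically zero its zeros are
isolated, and it suffices to show that it does not vanish near `±∞`. This follows from a
Hardy-field property: every such function has eventually constant sign at `+∞`.

This is proved by induction on the nesting depth. A function of depth `n + 1` is a sum
`∑ uᵢ exp hᵢ` with `uᵢ, hᵢ` of depth `n`; depth-`n` functions form a differential algebra and
have eventually constant sign. Dividing the sum by its first term `u₀ exp h₀` (which may be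
assumed eventually nonzero) and differentiating gives `W / (u₀ exp h₀)²`, where the Wronskian
`W` is `exp h₀` times a sum of the same shape with one term fewer. By induction on the number of
terms `W` has eventually constant sign, so the quotient is eventually monotone, hence of
eventually constant sign, and so is the sum.
-/

open Filter Set Topology

def HasEventualSign (f : ℝ → ℝ) : Prop :=
  ∃ σ : SignType, ∀ᶠ x in atTop, SignType.sign (f x) = σ

namespace HasEventualSign

variable {f g : ℝ → ℝ}

theorem congr (hf : HasEventualSign f) (hfg : f =ᶠ[atTop] g) : HasEventualSign g := by
  obtain ⟨σ, hσ⟩ := hf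
  exact ⟨σ, by filter_upwards [hσ, hfg] with x hx hx' using hx' ▸ hx⟩

theorem of_eventually_pos (hf : ∀ᶠ x in atTop, 0 < f x) : HasEventualSign f :=
  ⟨1, hf.mono fun _ => sign_pos⟩

theorem mul (hf : HasEventualSign f) (hg : HasEventualSign g) :
    HasEventualSign fun x => f x * g x := by
  obtain ⟨σ, hσ⟩ := hf
  obtain ⟨τ, hτ⟩ := hg
  exact ⟨σ * τ, by filter_upwards [hσ, hτ] with x hx hx' using by rw [sign_mul, hx, hx']⟩

theorem of_neg (hf : HasEventualSign fun x => -f x) : HasEventualSign f := by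
  obtain ⟨σ, hσ⟩ := hf
  exact ⟨-σ, by filter_upwards [hσ] with x hx using by rw [← hx, Left.sign_neg, neg_neg]⟩

theorem eventually_eq_zero_or_ne_zero (hf : HasEventualSign f) :
    (∀ᶠ x in atTop, f x = 0) ∨ ∀ᶠ x in atTop, f x ≠ 0 := by
  obtain ⟨σ, hσ⟩ := hf
  rcases eq_or_ne σ 0 with rfl | hσ0
  · exact .inl (hσ.mono fun _ => sign_eq_zero_iff.1)
  · exact .inr (hσ.mono fun x hx hfx => hσ0 (by rw [← hx, hfx, sign_zero]))

theorem eventually_ne_zero_of_analyticOnNhd (hf : HasEventualSign f)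
    (hfa : AnalyticOnNhd ℝ f univ) {x₀ : ℝ} (hx₀ : f x₀ ≠ 0) : ∀ᶠ x in atTop, f x ≠ 0 := by
  refine hf.eventually_eq_zero_or_ne_zero.resolve_left fun h => hx₀ ?_
  obtain ⟨a, ha⟩ := eventually_atTop.1 h
  exact hfa.eqOn_zero_of_preconnected_of_eventuallyEq_zero isPreconnected_univ (mem_univ (a + 1))
    (eventually_of_mem (Ioi_mem_nhds (lt_add_one a)) fun x hx => ha x hx.le) (mem_univ x₀)

theorem of_strictMonoOn {a : ℝ} (hf : StrictMonoOn f (Ici a)) : HasEventualSign f := by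
  by_cases h : ∃ b ≥ a, 0 ≤ f b
  · obtain ⟨b, hab, hb⟩ := h
    refine ⟨1, ?_⟩
    filter_upwards [eventually_gt_atTop b] with x hx
    exact sign_pos (hb.trans_lt (hf hab (hab.trans hx.le) hx))
  · push Not at h
    exact ⟨-1, by filter_upwards [eventually_ge_atTop a] with x hx using sign_neg (h x hx)⟩

theorem of_hasDerivAt {f' : ℝ → ℝ} (hf : ∀ᶠ x in atTop, HasDerivAt f (f' x) x)
    (hf' : HasEventualSign f') : HasEventualSign f := by
  obtain ⟨σ, hσ⟩ := hf'
  obtain ⟨a, ha⟩ := eventually_atTop.1 (hf.and hσ)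
  have hcont : ContinuousOn f (Ici a) := fun x hx =>
    (ha x hx).1.continuousAt.continuousWithinAt
  have hderiv : ∀ x ∈ interior (Ici a), HasDerivWithinAt f (f' x) (interior (Ici a)) x :=
    fun x hx => (ha x (interior_subset hx)).1.hasDerivWithinAt
  have hsign : ∀ x ∈ interior (Ici a), SignType.sign (f' x) = σ := fun x hx =>
    (ha x (interior_subset hx)).2
  cases σ with
  | zero =>
    refine ⟨SignType.sign (f (a + 1)), ?_⟩
    filter_upwards [eventually_gt_atTop a] with x hx
    rw [isOpen_Ioi.is_const_of_deriv_eq_zero isPreconnected_Ioi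
      (fun y hy => (ha y hy.le).1.differentiableAt.differentiableWithinAt)
      (fun y hy => (ha y hy.le).1.deriv.trans (sign_eq_zero_iff.1 (ha y hy.le).2))
      hx (lt_add_one a)]
  | neg =>
    exact of_neg <| of_strictMonoOn <| StrictAntiOn.neg <|
      strictAntiOn_of_hasDerivWithinAt_neg (convex_Ici a) hcont hderiv
        fun x hx => sign_eq_neg_one_iff.1 (hsign x hx)
  | pos =>
    exact of_strictMonoOn <| strictMonoOn_of_hasDerivWithinAt_pos (convex_Ici a) hcont hderiv
      fun x hx => sign_eq_one_iff.1 (hsign x hx)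

theorem of_hasDerivAt_wronskian {p q p' q' : ℝ → ℝ}
    (hp : ∀ᶠ x in atTop, HasDerivAt p (p' x) x) (hq : ∀ᶠ x in atTop, HasDerivAt q (q' x) x)
    (hps : HasEventualSign p) (hp0 : ∀ᶠ x in atTop, p x ≠ 0)
    (hW : HasEventualSign fun x => q' x * p x - q x * p' x) : HasEventualSign q := by
  have hquot : HasEventualSign fun x => q x / p x := by
    refine of_hasDerivAt (f' := fun x => (q' x * p x - q x * p' x) * (p x ^ 2)⁻¹) ?_
      (hW.mul (of_eventually_pos (hp0.mono fun x hx => by positivity)))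
    filter_upwards [hp, hq, hp0] with x hpx hqx hx
    exact (hqx.div hpx hx).congr_deriv (div_eq_mul_inv _ _)
  exact (hquot.mul hps).congr (hp0.mono fun x hx => div_mul_cancel₀ _ hx)

end HasEventualSign

theorem Polynomial.hasEventualSign_eval (p : Polynomial ℝ) :
    HasEventualSign fun x => p.eval x := by
  induction hn : p.natDegree using Nat.strong_induction_on generalizing p with
  | _ n ih =>
    by_cases h0 : n = 0
    · rw [Polynomial.eq_C_of_natDegree_eq_zero (hn.trans h0)]
      exact ⟨SignType.sign (p.coeff 0), by simp⟩
    · exact .of_hasDerivAt (.of_forall p.hasDerivAt)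
        (ih _ (hn ▸ Polynomial.natDegree_derivative_lt (hn ▸ h0)) _ rfl)

def IsDerivClosed (A : Subalgebra ℝ (ℝ → ℝ)) : Prop :=
  ∀ f ∈ A, Differentiable ℝ f ∧ deriv f ∈ A

theorem isDerivClosed_adjoin {S : Set (ℝ → ℝ)}
    (hS : ∀ f ∈ S, Differentiable ℝ f ∧ deriv f ∈ Algebra.adjoin ℝ S) :
    IsDerivClosed (Algebra.adjoin ℝ S) := by
  intro f hf
  induction hf using Algebra.adjoin_induction with
  | mem f hf => exact hS f hf
  | algebraMap c =>
    refine ⟨differentiable_const c, ?_⟩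
    rw [show deriv (algebraMap ℝ (ℝ → ℝ) c) = 0 from funext fun x => deriv_const x c]
    exact zero_mem _
  | add f g _ _ hf hg =>
    refine ⟨hf.1.add hg.1, ?_⟩
    rw [show deriv (f + g) = deriv f + deriv g from funext fun x => deriv_add (hf.1 x) (hg.1 x)]
    exact add_mem hf.2 hg.2
  | mul f g hf' hg' hf hg =>
    refine ⟨hf.1.mul hg.1, ?_⟩
    rw [show deriv (f * g) = deriv f * g + f * deriv g from
      funext fun x => deriv_mul (hf.1 x) (hg.1 x)]
    exact add_mem (mul_mem hf.2 hg') (mul_mem hf' hg.2)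

def expMonomials (A : Subalgebra ℝ (ℝ → ℝ)) : Submonoid (ℝ → ℝ) where
  carrier := {f | ∃ u ∈ A, ∃ h ∈ A, f = u * (Real.exp ∘ h)}
  one_mem' := ⟨1, one_mem A, 0, zero_mem A, by ext; simp⟩
  mul_mem' := by
    rintro _ _ ⟨u, hu, h, hh, rfl⟩ ⟨v, hv, k, hk, rfl⟩
    exact ⟨u * v, mul_mem hu hv, h + k, add_mem hh hk, by ext; simp [Real.exp_add]; ring⟩

def expExtension (A : Subalgebra ℝ (ℝ → ℝ)) : Subalgebra ℝ (ℝ → ℝ) :=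
  Algebra.adjoin ℝ (A ∪ (Real.exp ∘ ·) '' A)

theorem le_expExtension (A : Subalgebra ℝ (ℝ → ℝ)) : A ≤ expExtension A :=
  fun _ hf => Algebra.subset_adjoin (.inl hf)

section

variable {A : Subalgebra ℝ (ℝ → ℝ)}

theorem exists_sum_mul_exp_of_mem_expExtension {f : ℝ → ℝ} (hf : f ∈ expExtension A) :
    ∃ (k : ℕ) (u h : Fin k → ℝ → ℝ), (∀ i, u i ∈ A) ∧ (∀ i, h i ∈ A) ∧
      f = fun x => ∑ i, u i x * Real.exp (h i x) := by
  have hgen : Submonoid.closure (A ∪ (Real.exp ∘ ·) '' A) ≤ expMonomials A := by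
    refine Submonoid.closure_le.2 ?_
    rintro _ (hu | ⟨h, hh, rfl⟩)
    · exact ⟨_, hu, 0, zero_mem A, by ext; simp⟩
    · exact ⟨1, one_mem A, h, hh, by ext; simp⟩
  have hspan : f ∈ Submodule.span ℝ (expMonomials A : Set (ℝ → ℝ)) :=
    Submodule.span_mono hgen (by rw [← Algebra.adjoin_eq_span]; exact hf)
  obtain ⟨k, c, g, rfl⟩ := Submodule.mem_span_set'.1 hspan
  choose u hu h hh hg using fun i => (g i).2
  refine ⟨k, fun i => c i • u i, h, fun i => A.smul_mem (hu i) _, hh, ?_⟩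
  ext x
  simp [hg, Finset.sum_apply, mul_assoc]

theorem IsDerivClosed.expExtension (hA : IsDerivClosed A) : IsDerivClosed (expExtension A) := by
  refine isDerivClosed_adjoin ?_
  rintro _ (hf | ⟨h, hh, rfl⟩)
  · exact ⟨(hA _ hf).1, Algebra.subset_adjoin (.inl (hA _ hf).2)⟩
  · refine ⟨(hA h hh).1.exp, ?_⟩
    rw [show deriv (Real.exp ∘ h) = (Real.exp ∘ h) * deriv h from
      funext fun x => ((hA h hh).1 x).hasDerivAt.exp.deriv]
    exact mul_mem (Algebra.subset_adjoin (.inr ⟨h, hh, rfl⟩))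
      (Algebra.subset_adjoin (.inl (hA h hh).2))

theorem hasDerivAt_mul_exp {u h : ℝ → ℝ} (hu : Differentiable ℝ u) (hh : Differentiable ℝ h)
    (x : ℝ) : HasDerivAt (fun y => u y * Real.exp (h y))
      ((deriv u x + u x * deriv h x) * Real.exp (h x)) x :=
  ((hu x).hasDerivAt.mul (hh x).hasDerivAt.exp).congr_deriv (by ring)

theorem hasEventualSign_sum_mul_exp (hA : IsDerivClosed A)
    (hsign : ∀ f ∈ A, HasEventualSign f) :
    ∀ {k : ℕ} (u h : Fin k → ℝ → ℝ), (∀ i, u i ∈ A) → (∀ i, h i ∈ A) →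
      HasEventualSign fun x => ∑ i, u i x * Real.exp (h i x)
  | 0, _, _, _, _ => ⟨0, by simp⟩
  | k + 1, u, h, hu, hh => by
    have IH := hasEventualSign_sum_mul_exp hA hsign (k := k)
    simp only [Fin.sum_univ_succ]
    rcases (hsign _ (hu 0)).eventually_eq_zero_or_ne_zero with hu0 | hu0
    · refine (IH _ _ (fun i => hu i.succ) (fun i => hh i.succ)).congr ?_
      filter_upwards [hu0] with x hx
      rw [hx, zero_mul, zero_add]
    set d : Fin (k + 1) → ℝ → ℝ := fun i => deriv (u i) + u i * deriv (h i)
    have hd (i) : d i ∈ A := add_mem (hA _ (hu i)).2 (mul_mem (hu i) (hA _ (hh i)).2)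
    have hD (i) (x : ℝ) : HasDerivAt (fun y => u i y * Real.exp (h i y))
        (d i x * Real.exp (h i x)) x :=
      hasDerivAt_mul_exp (hA _ (hu i)).1 (hA _ (hh i)).1 x
    -- the Wronskian of the sum against its first term loses that term
    have hW (x : ℝ) : (∑ i : Fin k, (u 0 x * d i.succ x - d 0 x * u i.succ x) *
          Real.exp (h i.succ x)) * Real.exp (h 0 x) =
        (d 0 x * Real.exp (h 0 x) + ∑ i : Fin k, d i.succ x * Real.exp (h i.succ x)) *
          (u 0 x * Real.exp (h 0 x)) -
        (u 0 x * Real.exp (h 0 x) + ∑ i : Fin k, u i.succ x * Real.exp (h i.succ x)) *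
          (d 0 x * Real.exp (h 0 x)) := by
      rw [Finset.sum_mul, add_mul, add_mul, Finset.sum_mul, Finset.sum_mul,
        mul_comm (u 0 x * _), add_sub_add_left_eq_sub, ← Finset.sum_sub_distrib]
      exact Finset.sum_congr rfl fun i _ => by ring
    have hexp : HasEventualSign fun x => Real.exp (h 0 x) :=
      .of_eventually_pos (.of_forall fun x => Real.exp_pos _)
    refine .of_hasDerivAt_wronskian (.of_forall (hD 0))
      (.of_forall fun x => (hD 0 x).add (HasDerivAt.fun_sum fun i _ => hD i.succ x))
      ((hsign _ (hu 0)).mul hexp) (hu0.mono fun x hx => mul_ne_zero hx (Real.exp_pos _).ne')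
      (((IH _ _ (fun i => sub_mem (mul_mem (hu 0) (hd _)) (mul_mem (hd 0) (hu _)))
        fun i => hh _).mul hexp).congr (.of_forall hW))

theorem hasEventualSign_of_mem_expExtension (hA : IsDerivClosed A)
    (hsign : ∀ f ∈ A, HasEventualSign f) {f : ℝ → ℝ} (hf : f ∈ expExtension A) :
    HasEventualSign f := by
  obtain ⟨k, u, h, hu, hh, rfl⟩ := exists_sum_mul_exp_of_mem_expExtension hf
  exact hasEventualSign_sum_mul_exp hA hsign u h hu hh

end

def expPolyLevel : ℕ → Subalgebra ℝ (ℝ → ℝ)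
  | 0 => Algebra.adjoin ℝ {id}
  | n + 1 => expExtension (expPolyLevel n)

theorem isDerivClosed_expPolyLevel : ∀ n, IsDerivClosed (expPolyLevel n)
  | 0 => isDerivClosed_adjoin fun f hf => by
    rw [Set.mem_singleton_iff.1 hf, deriv_id']
    exact ⟨differentiable_id, one_mem _⟩
  | n + 1 => (isDerivClosed_expPolyLevel n).expExtension

theorem hasEventualSign_of_mem_expPolyLevel :
    ∀ (n : ℕ) (f : ℝ → ℝ), f ∈ expPolyLevel n → HasEventualSign f
  | 0, f, hf => by
    obtain ⟨p, rfl⟩ : f ∈ (Polynomial.aeval (R := ℝ) (id : ℝ → ℝ)).range := by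
      rw [← Algebra.adjoin_singleton_eq_range_aeval]; exact hf
    refine p.hasEventualSign_eval.congr (.of_forall fun x => ?_)
    exact (Polynomial.aeval_fn_apply p id x).symm
  | n + 1, _, hf => hasEventualSign_of_mem_expExtension (isDerivClosed_expPolyLevel n)
      (hasEventualSign_of_mem_expPolyLevel n) hf

theorem expPolyLevel_mono : Monotone expPolyLevel :=
  monotone_nat_of_le_succ fun _ => le_expExtension _

namespace ExpPoly

theorem exists_mem_expPolyLevel {f : ℝ → ℝ} (hf : ExpPoly f) : ∃ n, f ∈ expPolyLevel n := by
  induction hf with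
  | const c => exact ⟨0, (expPolyLevel 0).algebraMap_mem c⟩
  | id => exact ⟨0, Algebra.subset_adjoin rfl⟩
  | add _ _ ihf ihg =>
    obtain ⟨m, hm⟩ := ihf
    obtain ⟨n, hn⟩ := ihg
    exact ⟨max m n, add_mem (expPolyLevel_mono (le_max_left m n) hm)
      (expPolyLevel_mono (le_max_right m n) hn)⟩
  | mul _ _ ihf ihg =>
    obtain ⟨m, hm⟩ := ihf
    obtain ⟨n, hn⟩ := ihg
    exact ⟨max m n, mul_mem (expPolyLevel_mono (le_max_left m n) hm)
      (expPolyLevel_mono (le_max_right m n) hn)⟩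
  | exp _ ih =>
    obtain ⟨n, hn⟩ := ih
    exact ⟨n + 1, Algebra.subset_adjoin (.inr ⟨_, hn, rfl⟩)⟩

theorem hasEventualSign {f : ℝ → ℝ} (hf : ExpPoly f) : HasEventualSign f :=
  let ⟨n, hn⟩ := hf.exists_mem_expPolyLevel
  hasEventualSign_of_mem_expPolyLevel n f hn

theorem comp_neg {f : ℝ → ℝ} (hf : ExpPoly f) : ExpPoly fun x => f (-x) := by
  induction hf with
  | const c => exact const c
  | id => simpa using (const (-1)).mul id
  | add _ _ ihf ihg => exact ihf.add ihg
  | mul _ _ ihf ihg => exact ihf.mul ihg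
  | exp _ ih => exact ih.exp

theorem analyticOnNhd {f : ℝ → ℝ} (hf : ExpPoly f) : AnalyticOnNhd ℝ f univ := by
  induction hf with
  | const c => exact analyticOnNhd_const
  | id => exact analyticOnNhd_id
  | add _ _ ihf ihg => exact ihf.add ihg
  | mul _ _ ihf ihg => exact ihf.mul ihg
  | exp _ ih => exact fun x hx => (ih x hx).rexp

end ExpPoly

/-- **Nonzero nested exponential polynomials have finitely many real zeros.**
For every nested exponential polynomial `f`, either `f` is identically zero on
`ℝ`, or the zero set `{x | f x = 0}` is finite. -/
theorem expPoly_zero_set_finite (f : ℝ → ℝ) (hf : ExpPoly f) :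
    (∀ x : ℝ, f x = 0) ∨ {x : ℝ | f x = 0}.Finite := by
  rw [or_iff_not_imp_left, not_forall]
  rintro ⟨x₀, hx₀⟩
  have htop : ∀ᶠ x in atTop, f x ≠ 0 :=
    hf.hasEventualSign.eventually_ne_zero_of_analyticOnNhd hf.analyticOnNhd hx₀
  have hbot : ∀ᶠ x in atBot, f x ≠ 0 := by
    have := hf.comp_neg.hasEventualSign.eventually_ne_zero_of_analyticOnNhd
      hf.comp_neg.analyticOnNhd (x₀ := -x₀) (by rwa [neg_neg])
    simpa using tendsto_neg_atBot_atTop.eventually this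
  obtain ⟨K, hK, hZK⟩ : ∃ K, IsCompact K ∧ {x | f x ≠ 0}ᶜ ⊆ K := mem_cocompact'.1 <| by
    rw [cocompact_eq_atBot_atTop]; exact eventually_sup.2 ⟨hbot, htop⟩
  by_contra hinf
  obtain ⟨z, -, hz⟩ := Set.Infinite.exists_accPt_of_subset_isCompact hinf hK fun x hx => hZK (· hx)
  exact hx₀ (hf.analyticOnNhd.eqOn_zero_of_preconnected_of_frequently_eq_zero isPreconnected_univ
    (mem_univ z) (accPt_iff_frequently_nhdsNE.1 hz) (mem_univ x₀))
end

section
/- No feed-forward exponential architecture can encode the concept of "even number" (exponential instance of the paper's Proposition): Let E be the smallest set of functions ℝ → ℝ that contains every constant function and the identity function, and is closed under pointwise addition, pointwise multiplication, and exponentiation f ↦ (fun x => Real.exp (f x)). Then no f ∈ E satisfies f (2·n) ≥ 1/2 and f (2·n + 1) < 1/2 for all n : ℕ; that is, no such function can partition arbitrarily large numbers into even and odd. -/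
/-!
Call `f : ℝ → ℝ` tame when arbitrarily large zeros force `f` to vanish on a neighbourhood of
`+∞`. If `f (2n) ≥ 1/2 > f (2n + 1)`, then `f - 1/2` has arbitrarily large zeros by the
intermediate value theorem but is not eventually zero, so it suffices that every nested
exponential polynomial is tame.

These functions live in a tower: level 0 is the polynomials, and level `n + 1` consists of the
finite sums `∑ aᵢ exp hᵢ` with `aᵢ, hᵢ` of level `n`. Each level is a differential ring of
tame functions (Khovanskii's argument). For a sum `∑ aᵢ exp hᵢ`, divide by `exp h₀` to get
`G = b + ∑ aᵢ exp (hᵢ - h₀)`. If `b` is eventually nonzero and `G` has arbitrarily large zeros,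
Rolle's theorem for `G / b` gives arbitrarily large zeros of the Wronskian `b G' - b' G`. In
the Wronskian `b` cancels, so it is a sum with one term fewer and hence eventually zero. Then
`G / b` is eventually constant, and that constant is `0`.
-/

open Filter Real Set

def TameAtTop (f : ℝ → ℝ) : Prop :=
  (∃ᶠ x in atTop, f x = 0) → ∀ᶠ x in atTop, f x = 0

lemma TameAtTop.congr {f g : ℝ → ℝ} (hf : TameAtTop f) (hfg : f =ᶠ[atTop] g) :
    TameAtTop g := fun hg =>
  (hf ((hg.and_eventually hfg).mono fun _ hx => hx.2 ▸ hx.1)).and hfg |>.mono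
    fun _ hx => hx.2 ▸ hx.1

lemma TameAtTop.mul_of_ne_zero {f g : ℝ → ℝ} (hf : TameAtTop f) (hg : ∀ x, g x ≠ 0) :
    TameAtTop fun x => f x * g x := fun hfg =>
  (hf (hfg.mono fun x hx => (mul_eq_zero.1 hx).resolve_right (hg x))).mono
    fun x hx => by simp [hx]

lemma TameAtTop.eventually_ne_zero {f : ℝ → ℝ} (hf : TameAtTop f)
    (hf0 : ¬ ∀ᶠ x in atTop, f x = 0) : ∀ᶠ x in atTop, f x ≠ 0 :=
  not_frequently.1 (mt hf hf0)

lemma frequently_eq_zero_of_frequently_sign_change {g : ℝ → ℝ} (hg : Continuous g)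
    (h : ∀ M, ∃ x ≥ M, ∃ y ≥ M, g x ≤ 0 ∧ 0 ≤ g y) : ∃ᶠ x in atTop, g x = 0 := by
  refine frequently_atTop.2 fun M => ?_
  obtain ⟨x, hx, y, hy, hgx, hgy⟩ := h M
  obtain ⟨c, hc, hc0⟩ := intermediate_value_uIcc hg.continuousOn (mem_uIcc.2 (Or.inl ⟨hgx, hgy⟩))
  exact ⟨c, (le_inf hx hy).trans hc.1, hc0⟩

lemma frequently_wronskian_eq_zero {a G : ℝ → ℝ} (ha : Differentiable ℝ a)
    (hG : Differentiable ℝ G) (ha0 : ∀ᶠ x in atTop, a x ≠ 0) (hG0 : ∃ᶠ x in atTop, G x = 0) :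
    ∃ᶠ x in atTop, a x * deriv G x - deriv a x * G x = 0 := by
  obtain ⟨M, hM⟩ := eventually_atTop.1 ha0
  refine frequently_atTop.2 fun N => ?_
  obtain ⟨x, hx, hGx⟩ := frequently_atTop.1 hG0 (max N M)
  obtain ⟨y, hy, hGy⟩ := frequently_atTop.1 hG0 (x + 1)
  have hxy : x < y := by linarith
  have ha0' : ∀ z ∈ Icc x y, a z ≠ 0 := fun z hz => hM z (by linarith [le_max_right N M, hz.1])
  obtain ⟨c, hc, hc0⟩ := exists_hasDerivAt_eq_zero hxy
    (hG.continuous.continuousOn.div ha.continuous.continuousOn ha0') (by simp [hGx, hGy])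
    fun z hz => (hG z).hasDerivAt.div (ha z).hasDerivAt (ha0' z (Ioo_subset_Icc_self hz))
  refine ⟨c, by linarith [le_max_left N M, hc.1], ?_⟩
  rw [div_eq_zero_iff, or_iff_left (pow_ne_zero 2 (ha0' c (Ioo_subset_Icc_self hc)))] at hc0
  linarith

lemma eventually_eq_zero_of_wronskian_eq_zero {a G : ℝ → ℝ} (ha : Differentiable ℝ a)
    (hG : Differentiable ℝ G) (ha0 : ∀ᶠ x in atTop, a x ≠ 0)
    (hW : ∀ᶠ x in atTop, a x * deriv G x - deriv a x * G x = 0) (hG0 : ∃ᶠ x in atTop, G x = 0) :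
    ∀ᶠ x in atTop, G x = 0 := by
  obtain ⟨M, hM⟩ := eventually_atTop.1 (ha0.and hW)
  have hconst : ∀ x ∈ Ioi M, ∀ y ∈ Ioi M, G x / a x = G y / a y := by
    refine fun x hx y hy => isOpen_Ioi.is_const_of_deriv_eq_zero isPreconnected_Ioi
      (hG.differentiableOn.div ha.differentiableOn fun z hz => (hM z (le_of_lt hz)).1)
      (fun z hz => ?_) hx hy
    obtain ⟨haz, hWz⟩ := hM z (le_of_lt hz)
    rw [deriv_div (hG z) (ha z) haz, Pi.zero_apply, div_eq_zero_iff]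
    left; linarith
  obtain ⟨y, hy, hGy⟩ := frequently_atTop.1 hG0 (M + 1)
  refine eventually_atTop.2 ⟨M + 1, fun x hx => ?_⟩
  have := hconst x (by simp; linarith) y (by simp; linarith)
  rwa [hGy, zero_div, div_eq_zero_iff, or_iff_left (hM x (by linarith)).1] at this

lemma TameAtTop.of_wronskian {a G : ℝ → ℝ} (ha : Differentiable ℝ a)
    (hG : Differentiable ℝ G) (ha0 : ∀ᶠ x in atTop, a x ≠ 0)
    (hW : TameAtTop fun x => a x * deriv G x - deriv a x * G x) : TameAtTop G :=
  fun hG0 => eventually_eq_zero_of_wronskian_eq_zero ha hG ha0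
    (hW (frequently_wronskian_eq_zero ha hG ha0 hG0)) hG0

lemma hasDerivAt_sum_mul_exp {ι : Type*} {s : Finset ι} {a h : ι → ℝ → ℝ}
    (ha : ∀ i ∈ s, Differentiable ℝ (a i)) (hh : ∀ i ∈ s, Differentiable ℝ (h i)) (x : ℝ) :
    HasDerivAt (fun x => ∑ i ∈ s, a i x * exp (h i x))
      (∑ i ∈ s, (deriv (a i) x + a i x * deriv (h i) x) * exp (h i x)) x := by
  refine HasDerivAt.fun_sum fun i hi =>
    ((ha i hi x).hasDerivAt.fun_mul (hh i hi x).hasDerivAt.exp).congr_deriv (by ring)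

lemma sum_mul_exp_insert_eq {ι : Type*} [DecidableEq ι] {s : Finset ι} {j : ι} (hj : j ∉ s)
    (a h : ι → ℝ → ℝ) (x : ℝ) :
    ∑ i ∈ insert j s, a i x * exp (h i x) =
      (a j x + ∑ i ∈ s, a i x * exp (h i x - h j x)) * exp (h j x) := by
  simp only [Finset.sum_insert hj, add_mul, Finset.sum_mul, mul_assoc, ← exp_add, sub_add_cancel]

lemma wronskian_add_sum_mul_exp {ι : Type*} {s : Finset ι} {a h : ι → ℝ → ℝ} {b : ℝ → ℝ}
    (hb : Differentiable ℝ b)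
    (ha : ∀ i ∈ s, Differentiable ℝ (a i)) (hh : ∀ i ∈ s, Differentiable ℝ (h i)) :
    (fun x => b x * deriv (fun y => b y + ∑ i ∈ s, a i y * exp (h i y)) x -
        deriv b x * (b x + ∑ i ∈ s, a i x * exp (h i x))) =
      fun x => ∑ i ∈ s, (b x * (deriv (a i) x + a i x * deriv (h i) x) - deriv b x * a i x) *
        exp (h i x) := by
  funext x
  rw [((hb x).hasDerivAt.fun_add (hasDerivAt_sum_mul_exp ha hh x)).deriv]
  simp only [mul_add, Finset.mul_sum, sub_mul, Finset.sum_sub_distrib]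
  ring_nf

lemma differentiable_sum_mul_exp {ι : Type*} {s : Finset ι} {a h : ι → ℝ → ℝ}
    (ha : ∀ i ∈ s, Differentiable ℝ (a i)) (hh : ∀ i ∈ s, Differentiable ℝ (h i)) :
    Differentiable ℝ fun x => ∑ i ∈ s, a i x * exp (h i x) :=
  fun x => (hasDerivAt_sum_mul_exp ha hh x).differentiableAt

def expLayer (S : Set (ℝ → ℝ)) : Set (ℝ → ℝ) :=
  {f | ∃ (ι : Type) (_ : Fintype ι) (a h : ι → ℝ → ℝ), (∀ i, a i ∈ S) ∧ (∀ i, h i ∈ S) ∧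
    f = fun x => ∑ i, a i x * exp (h i x)}

lemma mul_exp_mem_expLayer {S : Set (ℝ → ℝ)} {a h : ℝ → ℝ} (ha : a ∈ S) (hh : h ∈ S) :
    (fun x => a x * exp (h x)) ∈ expLayer S :=
  ⟨Unit, inferInstance, fun _ => a, fun _ => h, fun _ => ha, fun _ => hh, by simp⟩

structure IsTameDiffRing (S : Set (ℝ → ℝ)) : Prop where
  const_mem : ∀ c : ℝ, (fun _ => c) ∈ S
  add_mem : ∀ {f g : ℝ → ℝ}, f ∈ S → g ∈ S → (fun x => f x + g x) ∈ S
  mul_mem : ∀ {f g : ℝ → ℝ}, f ∈ S → g ∈ S → (fun x => f x * g x) ∈ S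
  differentiable : ∀ f ∈ S, Differentiable ℝ f
  deriv_mem : ∀ f ∈ S, deriv f ∈ S
  tameAtTop : ∀ f ∈ S, TameAtTop f

namespace IsTameDiffRing

variable {S : Set (ℝ → ℝ)} {ι : Type*}

lemma sub_mem (hS : IsTameDiffRing S) {f g : ℝ → ℝ} (hf : f ∈ S) (hg : g ∈ S) :
    (fun x => f x - g x) ∈ S := by
  simpa [sub_eq_add_neg] using hS.add_mem hf (hS.mul_mem (hS.const_mem (-1)) hg)

lemma tameAtTop_add_sum_mul_exp (hS : IsTameDiffRing S) {s : Finset ι}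
    (ih : ∀ a h : ι → ℝ → ℝ, (∀ i ∈ s, a i ∈ S) → (∀ i ∈ s, h i ∈ S) →
      TameAtTop fun x => ∑ i ∈ s, a i x * exp (h i x))
    {b : ℝ → ℝ} (hb : b ∈ S) {a h : ι → ℝ → ℝ} (ha : ∀ i ∈ s, a i ∈ S) (hh : ∀ i ∈ s, h i ∈ S) :
    TameAtTop fun x => b x + ∑ i ∈ s, a i x * exp (h i x) := by
  by_cases hb0 : ∀ᶠ x in atTop, b x = 0
  · exact (ih a h ha hh).congr (hb0.mono fun x hx => by simp [hx])
  have ha' i hi := hS.differentiable (a i) (ha i hi)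
  have hh' i hi := hS.differentiable (h i) (hh i hi)
  refine .of_wronskian (hS.differentiable b hb)
    ((hS.differentiable b hb).fun_add (differentiable_sum_mul_exp ha' hh'))
    ((hS.tameAtTop b hb).eventually_ne_zero hb0) ?_
  rw [wronskian_add_sum_mul_exp (hS.differentiable b hb) ha' hh']
  refine ih _ h (fun i hi => hS.sub_mem (hS.mul_mem hb ?_)
    (hS.mul_mem (hS.deriv_mem b hb) (ha i hi))) hh
  exact hS.add_mem (hS.deriv_mem _ (ha i hi)) (hS.mul_mem (ha i hi) (hS.deriv_mem _ (hh i hi)))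

lemma tameAtTop_sum_mul_exp (hS : IsTameDiffRing S) (s : Finset ι) {a h : ι → ℝ → ℝ}
    (ha : ∀ i ∈ s, a i ∈ S) (hh : ∀ i ∈ s, h i ∈ S) :
    TameAtTop fun x => ∑ i ∈ s, a i x * exp (h i x) := by
  classical
  induction s using Finset.induction_on generalizing a h with
  | empty => exact fun _ => by simp
  | insert j s hj ih =>
    simp only [Finset.mem_insert, forall_eq_or_imp] at ha hh
    simp only [sum_mul_exp_insert_eq hj]
    refine TameAtTop.mul_of_ne_zero ?_ fun x => exp_ne_zero _
    exact hS.tameAtTop_add_sum_mul_exp (fun a h => ih) ha.1 ha.2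
      fun i hi => hS.sub_mem (hh.2 i hi) hh.1

lemma subset_expLayer (hS : IsTameDiffRing S) : S ⊆ expLayer S := fun f hf => by
  simpa using mul_exp_mem_expLayer hf (hS.const_mem 0)

lemma expLayer (hS : IsTameDiffRing S) : IsTameDiffRing (expLayer S) where
  const_mem c := hS.subset_expLayer (hS.const_mem c)
  add_mem := by
    rintro _ _ ⟨ι, _, a, h, ha, hh, rfl⟩ ⟨κ, _, b, k, hb, hk, rfl⟩
    exact ⟨ι ⊕ κ, inferInstance, Sum.elim a b, Sum.elim h k, Sum.forall.2 ⟨ha, hb⟩,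
      Sum.forall.2 ⟨hh, hk⟩, by simp [Fintype.sum_sum_type]⟩
  mul_mem := by
    rintro _ _ ⟨ι, _, a, h, ha, hh, rfl⟩ ⟨κ, _, b, k, hb, hk, rfl⟩
    refine ⟨ι × κ, inferInstance, fun p x => a p.1 x * b p.2 x, fun p x => h p.1 x + k p.2 x,
      fun p => hS.mul_mem (ha p.1) (hb p.2), fun p => hS.add_mem (hh p.1) (hk p.2), ?_⟩
    funext x
    rw [Finset.sum_mul_sum, ← Finset.sum_product']
    exact Finset.sum_congr rfl fun p _ => by rw [exp_add]; ring
  differentiable := by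
    rintro _ ⟨ι, _, a, h, ha, hh, rfl⟩
    exact differentiable_sum_mul_exp (fun i _ => hS.differentiable _ (ha i))
      fun i _ => hS.differentiable _ (hh i)
  deriv_mem := by
    rintro _ ⟨ι, _, a, h, ha, hh, rfl⟩
    refine ⟨ι, inferInstance, fun i x => deriv (a i) x + a i x * deriv (h i) x, h,
      fun i => hS.add_mem (hS.deriv_mem _ (ha i)) (hS.mul_mem (ha i) (hS.deriv_mem _ (hh i))),
      hh, funext fun x => ?_⟩
    exact (hasDerivAt_sum_mul_exp (fun i _ => hS.differentiable _ (ha i))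
      (fun i _ => hS.differentiable _ (hh i)) x).deriv
  tameAtTop := by
    rintro _ ⟨ι, _, a, h, ha, hh, rfl⟩
    exact hS.tameAtTop_sum_mul_exp _ (fun i _ => ha i) fun i _ => hh i

end IsTameDiffRing

lemma isTameDiffRing_range_eval :
    IsTameDiffRing (Set.range fun p : Polynomial ℝ => fun x => p.eval x) where
  const_mem c := ⟨Polynomial.C c, by simp⟩
  add_mem := by rintro _ _ ⟨p, rfl⟩ ⟨q, rfl⟩; exact ⟨p + q, by simp⟩
  mul_mem := by rintro _ _ ⟨p, rfl⟩ ⟨q, rfl⟩; exact ⟨p * q, by simp⟩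
  differentiable := by rintro _ ⟨p, rfl⟩; exact p.differentiable
  deriv_mem := by
    rintro _ ⟨p, rfl⟩
    exact ⟨Polynomial.derivative p, funext fun x => (Polynomial.deriv p).symm⟩
  tameAtTop := by
    rintro _ ⟨p, rfl⟩ hp
    by_cases hp0 : p = 0
    · simp [hp0]
    · exact absurd hp (not_frequently.2 (Polynomial.eventually_atTop_not_isRoot p hp0))

def expTower : ℕ → Set (ℝ → ℝ)
  | 0 => Set.range fun p : Polynomial ℝ => fun x => p.eval x
  | n + 1 => expLayer (expTower n)

lemma isTameDiffRing_expTower : ∀ n, IsTameDiffRing (expTower n)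
  | 0 => isTameDiffRing_range_eval
  | n + 1 => (isTameDiffRing_expTower n).expLayer

lemma monotone_expTower : Monotone expTower :=
  monotone_nat_of_le_succ fun n => (isTameDiffRing_expTower n).subset_expLayer

lemma ExpPoly.exists_mem_expTower {f : ℝ → ℝ} (hf : ExpPoly f) : ∃ n, f ∈ expTower n := by
  induction hf with
  | const c => exact ⟨0, Polynomial.C c, by simp⟩
  | id => exact ⟨0, Polynomial.X, by simp⟩
  | add _ _ ihf ihg =>
    obtain ⟨m, hm⟩ := ihf
    obtain ⟨k, hk⟩ := ihg
    exact ⟨max m k, (isTameDiffRing_expTower _).add_mem (monotone_expTower (le_max_left m k) hm)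
      (monotone_expTower (le_max_right m k) hk)⟩
  | mul _ _ ihf ihg =>
    obtain ⟨m, hm⟩ := ihf
    obtain ⟨k, hk⟩ := ihg
    exact ⟨max m k, (isTameDiffRing_expTower _).mul_mem (monotone_expTower (le_max_left m k) hm)
      (monotone_expTower (le_max_right m k) hk)⟩
  | exp _ ih =>
    obtain ⟨m, hm⟩ := ih
    exact ⟨m + 1, by
      simpa [expTower] using mul_exp_mem_expLayer ((isTameDiffRing_expTower m).const_mem 1) hm⟩

/-- **No feed-forward exponential architecture can encode the concept of "even
number".**  No nested exponential polynomial `f` satisfies `f (2·n) ≥ 1/2` and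
`f (2·n + 1) < 1/2` for all `n : ℕ`; that is, no such function can partition
arbitrarily large numbers into even and odd. -/
theorem expPoly_cannot_encode_even (f : ℝ → ℝ) (hf : ExpPoly f) :
    ¬ (∀ n : ℕ, f (2 * n) ≥ 1 / 2 ∧ f (2 * n + 1) < 1 / 2) := by
  intro hparity
  obtain ⟨N, hfN⟩ := hf.exists_mem_expTower
  have hS := isTameDiffRing_expTower N
  have hgS : (fun x => f x - 1 / 2) ∈ expTower N := hS.sub_mem hfN (hS.const_mem _)
  have hzeros : ∃ᶠ x in atTop, f x - 1 / 2 = 0 := by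
    refine frequently_eq_zero_of_frequently_sign_change (hS.differentiable _ hgS).continuous
      fun M => ?_
    obtain ⟨n, hn⟩ := exists_nat_ge M
    refine ⟨2 * n + 1, by linarith, 2 * n, by linarith, ?_, ?_⟩ <;> linarith [hparity n]
  obtain ⟨M, hM⟩ := eventually_atTop.1 (hS.tameAtTop _ hgS hzeros)
  obtain ⟨n, hn⟩ := exists_nat_ge M
  linarith [hM (2 * n + 1) (by linarith), hparity n]
end
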